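/- arXiv:2601.09590 — 2 statements merged into one kernel-verified Lean document; each statement's English description precedes it below -/
import Mathlib

section
/- Let D be any function assigning to each pair (ρ, σ), where ρ is a state on H_k and σ is a PSD matrix on H_k, a value in ℝ ∪ {+∞}, such that D satisfies the scaling property D(ρ‖cσ) = D(ρ‖σ) − log₂ c for every real c > 0 and every nonzero PSD σ, with the convention D(ρ‖0) = +∞. Define the multipartite D-Rains entanglement 𝐑(ρ) as the infimum of D(ρ‖σ) + log₂(∑_{S∈M} r_S ‖T_S(ω_S)‖₁) over all states σ on H_k admitting a decomposition σ = ∑_{S∈M} r_S ω_S with (r_S)_{S∈M} a probability distribution and each ω_S a state on H_k. Then for every state ρ on H_k, 𝐑(ρ) = inf_{τ ∈ T(H_k)} D(ρ‖τ). -/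
open scoped BigOperators ComplexOrder

noncomputable section

/-- Index type of a `k`-partite system with local dimensions `d j`. -/
abbrev PIdx (k : ℕ) (d : Fin k → ℕ) := ∀ j : Fin k, Fin (d j)

/-- The trace norm `‖X‖₁ = Tr[√(XᴴX)]`. -/
noncomputable def traceNorm {n : Type*} [Fintype n] [DecidableEq n] (X : Matrix n n ℂ) : ℝ :=
  (((Matrix.posSemidef_conjTranspose_mul_self X).1.eigenvectorUnitary : Matrix n n ℂ) *
    Matrix.diagonal (fun i => ((Real.sqrt ((Matrix.posSemidef_conjTranspose_mul_self X).1.eigenvalues i) : ℝ) : ℂ)) *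
    (star (Matrix.posSemidef_conjTranspose_mul_self X).1.eigenvectorUnitary : Matrix n n ℂ)).trace.re

/-- Partial transpose on the parties in `S`. -/
def partialTranspose {k : ℕ} {d : Fin k → ℕ} (S : Finset (Fin k))
    (X : Matrix (PIdx k d) (PIdx k d) ℂ) : Matrix (PIdx k d) (PIdx k d) ℂ :=
  Matrix.of fun a b =>
    X (fun j => if j ∈ S then b j else a j) (fun j => if j ∈ S then a j else b j)

/-- The set `M` of bipartition labels: nonempty subsets of the parties not containing party `0`. -/
def Bipartitions (k : ℕ) : Finset (Finset (Fin k)) :=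
  Finset.univ.filter fun S => S.Nonempty ∧ ∀ i ∈ S, i.val ≠ 0

/-- A quantum state: PSD with unit trace. -/
def IsState {n : Type*} [Fintype n] (ρ : Matrix n n ℂ) : Prop :=
  ρ.PosSemidef ∧ ρ.trace = 1

/-- The Rains set `T(H_k)`. -/
def RainsSet (k : ℕ) (d : Fin k → ℕ) : Set (Matrix (PIdx k d) (PIdx k d) ℂ) :=
  {τ | τ.PosSemidef ∧ ∃ f : Finset (Fin k) → Matrix (PIdx k d) (PIdx k d) ℂ,
    (∀ S ∈ Bipartitions k, (f S).PosSemidef) ∧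
    τ = ∑ S ∈ Bipartitions k, f S ∧
    ∑ S ∈ Bipartitions k, traceNorm (partialTranspose S (f S)) ≤ 1}

/-- Apply a real function to a Hermitian matrix via the spectral decomposition. -/
noncomputable def herCfc {n : Type*} [Fintype n] [DecidableEq n] {A : Matrix n n ℂ}
    (hA : A.IsHermitian) (f : ℝ → ℝ) : Matrix n n ℂ :=
  (hA.eigenvectorUnitary : Matrix n n ℂ) *
    Matrix.diagonal (fun i => (f (hA.eigenvalues i) : ℂ)) *
    (star hA.eigenvectorUnitary : Matrix n n ℂ)

/-- `log₂` of a Hermitian matrix, computed on its support. -/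
noncomputable def matLog2 {n : Type*} [Fintype n] [DecidableEq n] (A : Matrix n n ℂ) :
    Matrix n n ℂ :=
  if hA : A.IsHermitian then herCfc hA (fun x => if x ≤ 0 then 0 else Real.logb 2 x) else 0

/-- `supp ρ ⊆ supp σ`, expressed as `ker σ ⊆ ker ρ`. -/
def SuppLE {n : Type*} [Fintype n] (ρ σ : Matrix n n ℂ) : Prop :=
  ∀ v : n → ℂ, σ.mulVec v = 0 → ρ.mulVec v = 0

open Classical in
/-- Quantum relative entropy `D(ρ‖σ)`, valued in `ℝ ∪ {+∞}`. -/
noncomputable def relEnt {n : Type*} [Fintype n] [DecidableEq n] (ρ σ : Matrix n n ℂ) : EReal :=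
  if SuppLE ρ σ then ((((ρ * (matLog2 ρ - matLog2 σ)).trace).re : ℝ) : EReal) else ⊤

/-- The genuine multipartite Rains entanglement (GMRE). -/
noncomputable def GMRE {k : ℕ} {d : Fin k → ℕ} (ρ : Matrix (PIdx k d) (PIdx k d) ℂ) : EReal :=
  ⨅ τ ∈ RainsSet k d, relEnt ρ τ

/-- Real power of a Hermitian matrix, computed on its support. -/
noncomputable def matPow {n : Type*} [Fintype n] [DecidableEq n] (A : Matrix n n ℂ) (p : ℝ) :
    Matrix n n ℂ :=
  if hA : A.IsHermitian then herCfc hA (fun x => if x ≤ 0 then 0 else x ^ p) else 0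

open Classical in
/-- Sandwiched Rényi relative entropy `D̃_α(ρ‖σ)`. -/
noncomputable def sandRenyi {n : Type*} [Fintype n] [DecidableEq n] (α : ℝ)
    (ρ σ : Matrix n n ℂ) : EReal :=
  if 1 < α ∧ ¬ SuppLE ρ σ then ⊤
  else ((((α - 1)⁻¹ * Real.logb 2
    (((matPow (matPow σ ((1 - α) / (2 * α)) * ρ * matPow σ ((1 - α) / (2 * α))) α).trace).re)) : ℝ)
    : EReal)

/-- The multipartite sandwiched Rényi–Rains entanglement. -/
noncomputable def RenyiRains {k : ℕ} {d : Fin k → ℕ} (α : ℝ)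
    (ρ : Matrix (PIdx k d) (PIdx k d) ℂ) : EReal :=
  ⨅ τ ∈ RainsSet k d, sandRenyi α ρ τ

/-- Complete positivity of a linear map on matrices. -/
def IsCP {n n' : Type*} [Fintype n] [DecidableEq n] [Fintype n'] [DecidableEq n']
    (P : Matrix n n ℂ →ₗ[ℂ] Matrix n' n' ℂ) : Prop :=
  ∀ (m : ℕ) (X : Matrix (Fin m × n) (Fin m × n) ℂ), X.PosSemidef →
    (Matrix.of fun p q : Fin m × n' =>
      P (Matrix.of fun a b => X (p.1, a) (q.1, b)) p.2 q.2).PosSemidef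

/-- Partial transpose as a linear map. -/
def ptMap {k : ℕ} {d : Fin k → ℕ} (S : Finset (Fin k)) :
    Matrix (PIdx k d) (PIdx k d) ℂ →ₗ[ℂ] Matrix (PIdx k d) (PIdx k d) ℂ where
  toFun := partialTranspose S
  map_add' X Y := by ext a b; simp [partialTranspose]
  map_smul' c X := by ext a b; simp [partialTranspose]

/-- A selective multipartite PPT operation. -/
def IsSelectivePPT {k : ℕ} {d d' : Fin k → ℕ} {X : Type*} [Fintype X]
    (P : X → (Matrix (PIdx k d) (PIdx k d) ℂ →ₗ[ℂ] Matrix (PIdx k d') (PIdx k d') ℂ)) : Prop :=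
  (∀ x, IsCP (P x)) ∧
  (∀ x, ∀ S ∈ Bipartitions k, IsCP ((ptMap S).comp ((P x).comp (ptMap S)))) ∧
  (∀ A, (∑ x, P x A).trace = A.trace)

/-- A PPT mixture. -/
def IsPPTMixture {k : ℕ} {d : Fin k → ℕ} (σ : Matrix (PIdx k d) (PIdx k d) ℂ) : Prop :=
  ∃ (r : Finset (Fin k) → ℝ) (ω : Finset (Fin k) → Matrix (PIdx k d) (PIdx k d) ℂ),
    (∀ S ∈ Bipartitions k, 0 ≤ r S) ∧ (∑ S ∈ Bipartitions k, r S = 1) ∧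
    (∀ S ∈ Bipartitions k, IsState (ω S) ∧ (partialTranspose S (ω S)).PosSemidef) ∧
    σ = ∑ S ∈ Bipartitions k, (r S : ℂ) • ω S

open Classical in
/-- The GHZ state `Φ^d` on `(ℂ^d)^{⊗k}`. -/
noncomputable def GHZ (k d : ℕ) :
    Matrix (PIdx k fun _ => d) (PIdx k fun _ => d) ℂ :=
  (d : ℂ)⁻¹ • ∑ i : Fin d, ∑ j : Fin d,
    Matrix.of (fun a b : PIdx k fun _ => d =>
      if (∀ l, a l = i) ∧ (∀ l, b l = j) then (1 : ℂ) else 0)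

open Classical in
/-- The completely dephased GHZ state `Φ̄^d`. -/
noncomputable def dephGHZ (k d : ℕ) :
    Matrix (PIdx k fun _ => d) (PIdx k fun _ => d) ℂ :=
  (d : ℂ)⁻¹ • ∑ i : Fin d,
    Matrix.of (fun a b : PIdx k fun _ => d =>
      if (∀ l, a l = i) ∧ (∀ l, b l = i) then (1 : ℂ) else 0)

/-- Binary entropy. -/
noncomputable def h2 (p : ℝ) : ℝ := -(p * Real.logb 2 p) - (1 - p) * Real.logb 2 (1 - p)

/-- Binary relative entropy `D((a,1−a)‖(b,1−b))`. -/
noncomputable def binRelEnt (a b : ℝ) : ℝ :=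
  a * Real.logb 2 (a / b) + (1 - a) * Real.logb 2 ((1 - a) / (1 - b))

end



noncomputable section AuxLemmas

open Matrix
open scoped ComplexOrder

variable {n : Type*} [Fintype n] [DecidableEq n]

lemma psd_diag_nonneg {X : Matrix n n ℂ} (hX : X.PosSemidef) (i : n) : 0 ≤ X i i := by
  have := hX.dotProduct_mulVec_nonneg (Pi.single i 1)
  simpa [dotProduct, Matrix.mulVec, Pi.single_apply, Finset.sum_ite_eq,
    apply_ite, mul_comm] using this

lemma psd_trace_nonneg {X : Matrix n n ℂ} (hX : X.PosSemidef) : 0 ≤ X.trace :=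
  Finset.sum_nonneg fun i _ => psd_diag_nonneg hX i

lemma psd_trace_re {X : Matrix n n ℂ} (hX : X.PosSemidef) : ((X.trace.re : ℝ) : ℂ) = X.trace := by
  have h := psd_trace_nonneg hX
  rw [Complex.le_def] at h
  exact Complex.ext rfl (by simpa using h.2)

lemma psd_trace_re_nonneg {X : Matrix n n ℂ} (hX : X.PosSemidef) : 0 ≤ X.trace.re := by
  have h := psd_trace_nonneg hX
  rw [Complex.le_def] at h
  simpa using h.1

lemma psd_trace_eq_zero {X : Matrix n n ℂ} (hX : X.PosSemidef) (h : X.trace = 0) : X = 0 := by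
  have hd : ∀ i, X i i = 0 := by
    intro i
    have := (Finset.sum_eq_zero_iff_of_nonneg (fun i _ => psd_diag_nonneg hX i)).mp h
    exact this i (Finset.mem_univ i)
  ext i j
  have hcol : X *ᵥ Pi.single j 1 = 0 := by
    rw [← hX.dotProduct_mulVec_zero_iff]
    have : star (Pi.single j (1:ℂ)) ⬝ᵥ X *ᵥ Pi.single j 1 = X j j := by
      simp [dotProduct, Matrix.mulVec, Pi.single_apply, Finset.sum_ite_eq,
        apply_ite, mul_comm]
    rw [this, hd j]
  have := congrFun hcol i
  simpa [Matrix.mulVec, Pi.single_apply, Finset.sum_ite_eq, apply_ite] using this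

open scoped MatrixOrder in
lemma traceNorm_eq_sqrt (X : Matrix n n ℂ) : traceNorm X = (CFC.sqrt (Xᴴ * X)).trace.re := by
  have h0 : (0 : Matrix n n ℂ) ≤ Xᴴ * X :=
    nonneg_iff_posSemidef.mpr (posSemidef_conjTranspose_mul_self X)
  rw [CFC.sqrt_eq_real_sqrt _ h0, cfcₙ_eq_cfc, (posSemidef_conjTranspose_mul_self X).1.cfc_eq]
  simp [traceNorm, IsHermitian.cfc, Function.comp_def]

open scoped MatrixOrder in
lemma traceNorm_nonneg' (X : Matrix n n ℂ) : 0 ≤ traceNorm X := by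
  rw [traceNorm_eq_sqrt]
  exact psd_trace_re_nonneg (nonneg_iff_posSemidef.mp (CFC.sqrt_nonneg _))

open scoped MatrixOrder in
lemma traceNorm_eq_of_sq {X B : Matrix n n ℂ} (hB : B.PosSemidef) (h : B ^ 2 = Xᴴ * X) :
    traceNorm X = B.trace.re := by
  rw [traceNorm_eq_sqrt, ← h, CFC.sqrt_sq B (nonneg_iff_posSemidef.mpr hB)]

lemma traceNorm_zero' : traceNorm (0 : Matrix n n ℂ) = 0 := by
  have : (0 : Matrix n n ℂ) ^ 2 = (0 : Matrix n n ℂ)ᴴ * 0 := by rw [sq]; simp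
  rw [traceNorm_eq_of_sq Matrix.PosSemidef.zero this]; simp

lemma psd_smul_real {X : Matrix n n ℂ} (hX : X.PosSemidef) {c : ℝ} (hc : 0 ≤ c) :
    (((c : ℂ)) • X).PosSemidef := by
  constructor
  · rw [Matrix.IsHermitian]
    rw [Matrix.conjTranspose_smul, hX.1.eq]
    congr 1
    simp
  · exact (hX.smul (show (0:ℂ) ≤ (c:ℂ) by exact_mod_cast Complex.zero_le_real.mpr hc)).2

open scoped MatrixOrder in
lemma traceNorm_smul' (X : Matrix n n ℂ) {c : ℝ} (hc : 0 ≤ c) :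
    traceNorm ((c : ℂ) • X) = c * traceNorm X := by
  set B := CFC.sqrt (Xᴴ * X) with hBdef
  have hB : B.PosSemidef := nonneg_iff_posSemidef.mp (CFC.sqrt_nonneg _)
  have hsq : ((c : ℂ) • B) ^ 2 = ((c : ℂ) • X)ᴴ * ((c : ℂ) • X) := by
    have h1 : ((c : ℂ) • X)ᴴ * ((c : ℂ) • X) = ((c : ℂ) * (c : ℂ)) • (Xᴴ * X) := by
      simp [Matrix.conjTranspose_smul, Matrix.smul_mul, Matrix.mul_smul, smul_smul,
        Complex.conj_ofReal]
      norm_cast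
    rw [h1, ← CFC.sq_sqrt (Xᴴ * X) (nonneg_iff_posSemidef.mpr (posSemidef_conjTranspose_mul_self X)), ← hBdef]
    rw [sq, sq]
    simp [Matrix.smul_mul, Matrix.mul_smul, smul_smul]
    norm_cast
  rw [traceNorm_eq_of_sq (psd_smul_real hB hc) hsq, Matrix.trace_smul]
  rw [traceNorm_eq_sqrt X, ← hBdef]
  simp

open scoped MatrixOrder in
lemma traceNorm_eq_zero' {X : Matrix n n ℂ} (h : traceNorm X = 0) : X = 0 := by
  have hB : (CFC.sqrt (Xᴴ * X)).PosSemidef :=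
    nonneg_iff_posSemidef.mp (CFC.sqrt_nonneg _)
  have htr : (CFC.sqrt (Xᴴ * X)).trace = 0 := by
    rw [← psd_trace_re hB]
    rw [traceNorm_eq_sqrt] at h
    rw [h]; simp
  have hz := psd_trace_eq_zero hB htr
  have h2 : Xᴴ * X = 0 := by
    rw [← CFC.sq_sqrt (Xᴴ * X) (nonneg_iff_posSemidef.mpr (posSemidef_conjTranspose_mul_self X)), hz]; rw [sq]; simp
  exact Matrix.conjTranspose_mul_self_eq_zero.mp h2

lemma traceNorm_pos {X : Matrix n n ℂ} (h : X ≠ 0) : 0 < traceNorm X :=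
  lt_of_le_of_ne (traceNorm_nonneg' X) (fun h0 => h (traceNorm_eq_zero' h0.symm))

lemma psd_sum {ι : Type*} (s : Finset ι) (g : ι → Matrix n n ℂ)
    (hg : ∀ i ∈ s, (g i).PosSemidef) : (∑ i ∈ s, g i).PosSemidef := by
  classical
  induction s using Finset.induction_on with
  | empty => simpa using Matrix.PosSemidef.zero
  | insert a t hx ih =>
    rw [Finset.sum_insert hx]
    exact (hg a (Finset.mem_insert_self a t)).add
      (ih fun i hi => hg i (Finset.mem_insert_of_mem hi))

section PT

variable {k : ℕ} {d : Fin k → ℕ}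

lemma pt_trace (S : Finset (Fin k)) (X : Matrix (PIdx k d) (PIdx k d) ℂ) :
    (partialTranspose S X).trace = X.trace := by
  simp [Matrix.trace, Matrix.diag, partialTranspose]

lemma pt_pt (S : Finset (Fin k)) (X : Matrix (PIdx k d) (PIdx k d) ℂ) :
    partialTranspose S (partialTranspose S X) = X := by
  ext a b
  show X _ _ = X a b
  congr 1 <;> funext j <;> by_cases h : j ∈ S <;> simp [h]

lemma pt_smul (S : Finset (Fin k)) (c : ℂ) (X : Matrix (PIdx k d) (PIdx k d) ℂ) :
    partialTranspose S (c • X) = c • partialTranspose S X := rfl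

end PT

end AuxLemmas

open Classical in
/-- the multipartite D-Rains entanglement equals the infimum over the Rains set. -/
theorem stmt0 {k : ℕ} (hk : 2 ≤ k) (d : Fin k → ℕ) (hd : ∀ j, 1 ≤ d j)
    (D : Matrix (PIdx k d) (PIdx k d) ℂ → Matrix (PIdx k d) (PIdx k d) ℂ → EReal)
    (hscale : ∀ ρ : Matrix (PIdx k d) (PIdx k d) ℂ, IsState ρ → ∀ σ : Matrix (PIdx k d) (PIdx k d) ℂ, σ.PosSemidef → σ ≠ 0 →
      ∀ c : ℝ, 0 < c → D ρ ((c : ℂ) • σ) = D ρ σ - ((Real.logb 2 c : ℝ) : EReal))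
    (hzero : ∀ ρ : Matrix (PIdx k d) (PIdx k d) ℂ, IsState ρ → D ρ 0 = ⊤)
    (ρ : Matrix (PIdx k d) (PIdx k d) ℂ) (hρ : IsState ρ) :
    sInf {v : EReal | ∃ (σ : Matrix (PIdx k d) (PIdx k d) ℂ) (r : Finset (Fin k) → ℝ)
        (ω : Finset (Fin k) → Matrix (PIdx k d) (PIdx k d) ℂ),
        IsState σ ∧
        (∀ S ∈ Bipartitions k, 0 ≤ r S) ∧ (∑ S ∈ Bipartitions k, r S = 1) ∧
        (∀ S ∈ Bipartitions k, IsState (ω S)) ∧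
        σ = ∑ S ∈ Bipartitions k, (r S : ℂ) • ω S ∧
        v = D ρ σ + ((Real.logb 2 (∑ S ∈ Bipartitions k,
              r S * traceNorm (partialTranspose S (ω S))) : ℝ) : EReal)} =
      ⨅ τ ∈ RainsSet k d, D ρ τ := by
  classical
  set M := Bipartitions k with hM
  set A := {v : EReal | ∃ (σ : Matrix (PIdx k d) (PIdx k d) ℂ) (r : Finset (Fin k) → ℝ)
        (ω : Finset (Fin k) → Matrix (PIdx k d) (PIdx k d) ℂ),
        IsState σ ∧
        (∀ S ∈ Bipartitions k, 0 ≤ r S) ∧ (∑ S ∈ Bipartitions k, r S = 1) ∧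
        (∀ S ∈ Bipartitions k, IsState (ω S)) ∧
        σ = ∑ S ∈ Bipartitions k, (r S : ℂ) • ω S ∧
        v = D ρ σ + ((Real.logb 2 (∑ S ∈ Bipartitions k,
              r S * traceNorm (partialTranspose S (ω S))) : ℝ) : EReal)} with hA
  apply le_antisymm
  · -- sInf A ≤ ⨅ τ ∈ RainsSet
    apply le_iInf₂
    intro τ hτ
    by_cases h0 : τ = 0
    · subst h0
      rw [hzero ρ hρ]
      exact le_top
    obtain ⟨hτPSD, f, hfPSD, hτsum, hfnorm⟩ := hτ
    set t : ℝ := τ.trace.re with htdef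
    have htC : ((t : ℝ) : ℂ) = τ.trace := psd_trace_re hτPSD
    have ht : 0 < t := by
      rcases lt_or_eq_of_le (psd_trace_re_nonneg hτPSD) with h | h
      · exact h
      · exact absurd (psd_trace_eq_zero hτPSD (by rw [← htC, htdef, ← h]; simp)) h0
    -- default state
    set a₀ : PIdx k d := fun j => ⟨0, hd j⟩ with ha₀
    set ω₀ : Matrix (PIdx k d) (PIdx k d) ℂ :=
      Matrix.diagonal (fun a => if a = a₀ then (1 : ℂ) else 0) with hω₀
    have hω₀state : IsState ω₀ := by
      constructor
      · exact Matrix.posSemidef_diagonal_iff.mpr fun i => by split <;> simp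
      · simp [hω₀, Matrix.trace_diagonal]
    set r : Finset (Fin k) → ℝ := fun S => (f S).trace.re / t with hr
    set ω : Finset (Fin k) → Matrix (PIdx k d) (PIdx k d) ℂ := fun S =>
      if h : (f S).trace.re = 0 then ω₀ else ((((f S).trace.re)⁻¹ : ℝ) : ℂ) • f S with hω
    have hfzero : ∀ S ∈ M, (f S).trace.re = 0 → f S = 0 := fun S hS h =>
      psd_trace_eq_zero (hfPSD S hS) (by rw [← psd_trace_re (hfPSD S hS), h]; simp)
    set σ : Matrix (PIdx k d) (PIdx k d) ℂ := (((t⁻¹ : ℝ)) : ℂ) • τ with hσ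
    have hσPSD : σ.PosSemidef := psd_smul_real hτPSD (inv_nonneg.mpr ht.le)
    have hσtr : σ.trace = 1 := by
      rw [hσ, Matrix.trace_smul, ← htC, smul_eq_mul]
      push_cast
      field_simp
    have hσstate : IsState σ := ⟨hσPSD, hσtr⟩
    have hσne : σ ≠ 0 := fun h => by simp [h] at hσtr
    have hτσ : τ = ((t : ℝ) : ℂ) • σ := by
      rw [hσ, smul_smul]
      have : ((t : ℝ) : ℂ) * ((t⁻¹ : ℝ) : ℂ) = 1 := by
        push_cast; field_simp
      rw [this, one_smul]
    have hDτ : D ρ τ = D ρ σ - ((Real.logb 2 t : ℝ) : EReal) := by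
      rw [hτσ]; exact hscale ρ hρ σ hσPSD hσne t ht
    -- properties of r, ω
    have hr0 : ∀ S ∈ M, 0 ≤ r S := fun S hS =>
      div_nonneg (psd_trace_re_nonneg (hfPSD S hS)) ht.le
    have htrsum : ∑ S ∈ M, (f S).trace.re = t := by
      rw [htdef, hτsum, Matrix.trace_sum, ← hM]
      exact (Complex.re_sum _ _).symm
    have hr1 : ∑ S ∈ M, r S = 1 := by
      rw [hr]
      simp only
      rw [← Finset.sum_div, htrsum, div_self ht.ne']
    have hωstate : ∀ S ∈ M, IsState (ω S) := by
      intro S hS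
      rw [hω]
      simp only
      split
      · exact hω₀state
      · rename_i h
        refine ⟨psd_smul_real (hfPSD S hS) (inv_nonneg.mpr (psd_trace_re_nonneg (hfPSD S hS))), ?_⟩
        rw [Matrix.trace_smul, ← psd_trace_re (hfPSD S hS), smul_eq_mul]
        push_cast
        field_simp
        rw [Complex.ofReal_re, div_self (by exact_mod_cast h)]
    have hσdec : σ = ∑ S ∈ M, (r S : ℂ) • ω S := by
      rw [hσ, hτsum, Finset.smul_sum]
      refine Finset.sum_congr rfl fun S hS => ?_
      rw [hω, hr]
      simp only
      split
      · rename_i h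
        rw [h, hfzero S hS h]
        simp
      · rename_i h
        rw [smul_smul]
        congr 1
        push_cast
        field_simp
    have hnormsum : ∑ S ∈ M, r S * traceNorm (partialTranspose S (ω S)) =
        t⁻¹ * ∑ S ∈ M, traceNorm (partialTranspose S (f S)) := by
      rw [Finset.mul_sum]
      refine Finset.sum_congr rfl fun S hS => ?_
      rw [hω, hr]
      simp only
      split
      · rename_i h
        rw [h, hfzero S hS h]
        rw [show partialTranspose S (0 : Matrix (PIdx k d) (PIdx k d) ℂ) = 0 from rfl,
          traceNorm_zero']
        simp
      · rename_i h
        rw [pt_smul, traceNorm_smul' _ (inv_nonneg.mpr (psd_trace_re_nonneg (hfPSD S hS)))]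
        field_simp
    set L : ℝ := ∑ S ∈ M, traceNorm (partialTranspose S (f S)) with hL
    have hL1 : L ≤ 1 := hfnorm
    have hLpos : 0 < L := by
      have hLnn : 0 ≤ L := by
        rw [hL]
        exact Finset.sum_nonneg fun S _ => traceNorm_nonneg' _
      rcases lt_or_eq_of_le hLnn with h | h
      · exact h
      · exfalso
        apply h0
        have hz := (Finset.sum_eq_zero_iff_of_nonneg
          (fun S _ => traceNorm_nonneg' (partialTranspose S (f S)))).mp h.symm
        rw [hτsum]
        refine Finset.sum_eq_zero fun S hS => ?_
        have : partialTranspose S (f S) = 0 := traceNorm_eq_zero' (hz S hS)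
        have := congrArg (partialTranspose S) this
        rwa [pt_pt, show partialTranspose S (0 : Matrix (PIdx k d) (PIdx k d) ℂ) = 0 from rfl]
          at this
    have hmem : (D ρ σ + ((Real.logb 2 (∑ S ∈ Bipartitions k,
          r S * traceNorm (partialTranspose S (ω S))) : ℝ) : EReal)) ∈ A := by
      exact ⟨σ, r, ω, hσstate, hr0, hr1, hωstate, hσdec, rfl⟩
    refine le_trans (sInf_le hmem) ?_
    rw [hDτ, hnormsum]
    have hineq : Real.logb 2 (t⁻¹ * L) ≤ -Real.logb 2 t := by
      rw [Real.logb_mul (inv_ne_zero ht.ne') hLpos.ne', Real.logb_inv]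
      have : Real.logb 2 L ≤ 0 := Real.logb_nonpos (by norm_num) hLpos.le hL1
      linarith
    calc D ρ σ + ((Real.logb 2 (t⁻¹ * L) : ℝ) : EReal)
        ≤ D ρ σ + ((-Real.logb 2 t : ℝ) : EReal) := by
          exact add_le_add_right (EReal.coe_le_coe_iff.mpr hineq) _
      _ = D ρ σ - ((Real.logb 2 t : ℝ) : EReal) := by
          rw [sub_eq_add_neg, EReal.coe_neg]
  · -- ⨅ ≤ sInf A
    apply le_sInf
    rintro v ⟨σ, r, ω, hσstate, hr0, hr1, hωstate, hσdec, hv⟩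
    set lam : ℝ := ∑ S ∈ Bipartitions k, r S * traceNorm (partialTranspose S (ω S)) with hlam
    -- lam > 0
    have hMne : (Bipartitions k).Nonempty := by
      refine ⟨{(⟨1, by omega⟩ : Fin k)}, ?_⟩
      rw [Bipartitions, Finset.mem_filter]
      refine ⟨Finset.mem_univ _, Finset.singleton_nonempty _, fun i hi => ?_⟩
      rw [Finset.mem_singleton] at hi
      subst hi
      simp
    obtain ⟨S₀, hS₀, hrS₀⟩ : ∃ S ∈ Bipartitions k, 0 < r S := by
      by_contra h
      push_neg at h
      have : ∑ S ∈ Bipartitions k, r S = 0 :=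
        Finset.sum_eq_zero fun S hS => le_antisymm (h S hS) (hr0 S hS)
      rw [hr1] at this
      norm_num at this
    have hωS₀ne : partialTranspose S₀ (ω S₀) ≠ 0 := by
      intro h
      have h1 : (partialTranspose S₀ (ω S₀)).trace = 1 := by
        rw [pt_trace]; exact (hωstate S₀ hS₀).2
      rw [h] at h1
      simp at h1
    have hlampos : 0 < lam := by
      have hterm : 0 < r S₀ * traceNorm (partialTranspose S₀ (ω S₀)) :=
        mul_pos hrS₀ (traceNorm_pos hωS₀ne)
      refine lt_of_lt_of_le hterm ?_
      exact Finset.single_le_sum (f := fun S => r S * traceNorm (partialTranspose S (ω S)))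
        (fun S hS => mul_nonneg (hr0 S hS) (traceNorm_nonneg' _)) hS₀
    have hσne : σ ≠ 0 := fun h => by
      have := hσstate.2
      rw [h] at this
      simp at this
    set τ : Matrix (PIdx k d) (PIdx k d) ℂ := (((lam⁻¹ : ℝ)) : ℂ) • σ with hτ
    have hτmem : τ ∈ RainsSet k d := by
      refine ⟨psd_smul_real hσstate.1 (inv_nonneg.mpr hlampos.le),
        fun S => (((r S * lam⁻¹ : ℝ)) : ℂ) • ω S, ?_, ?_, ?_⟩
      · intro S hS
        exact psd_smul_real (hωstate S hS).1 (mul_nonneg (hr0 S hS) (inv_nonneg.mpr hlampos.le))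
      · rw [hτ, hσdec, Finset.smul_sum]
        refine Finset.sum_congr rfl fun S hS => ?_
        rw [smul_smul]
        congr 1
        push_cast
        ring
      · have : ∀ S ∈ Bipartitions k,
            traceNorm (partialTranspose S ((((r S * lam⁻¹ : ℝ)) : ℂ) • ω S)) =
            (r S * lam⁻¹) * traceNorm (partialTranspose S (ω S)) := fun S hS => by
          rw [pt_smul, traceNorm_smul' _ (mul_nonneg (hr0 S hS) (inv_nonneg.mpr hlampos.le))]
        rw [Finset.sum_congr rfl this]
        have : ∑ S ∈ Bipartitions k, r S * lam⁻¹ * traceNorm (partialTranspose S (ω S)) =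
            lam⁻¹ * lam := by
          rw [hlam, Finset.mul_sum]
          exact Finset.sum_congr rfl fun S hS => by ring
        rw [this, inv_mul_cancel₀ hlampos.ne']
    have hDτ : D ρ τ = v := by
      rw [hτ, hscale ρ hρ σ hσstate.1 hσne lam⁻¹ (inv_pos.mpr hlampos), hv, Real.logb_inv]
      rw [sub_eq_add_neg, ← EReal.coe_neg, neg_neg]
    calc (⨅ τ' ∈ RainsSet k d, D ρ τ') ≤ D ρ τ := iInf₂_le τ hτmem
      _ = v := hDτ
end

section
/- For every τ ∈ T((ℂ^d)^{⊗k}), the overlap with the GHZ state satisfies Tr[Φ^d τ] ≤ 1/d. -/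
open scoped BigOperators ComplexOrder

section Aux

open Matrix
open scoped ComplexOrder

lemma traceNorm_eq_sum_abs_eigenvalues {n : Type*} [Fintype n] [DecidableEq n]
    {Y : Matrix n n ℂ} (hY : Y.IsHermitian) :
    traceNorm Y = ∑ i, |hY.eigenvalues i| := by
  set U : Matrix n n ℂ := (hY.eigenvectorUnitary : Matrix n n ℂ) with hUdef
  have hUU : star U * U = 1 := (Matrix.mem_unitaryGroup_iff').mp hY.eigenvectorUnitary.2
  have key : ∀ D E : n → ℂ, (U * Matrix.diagonal D * star U) * (U * Matrix.diagonal E * star U)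
      = U * Matrix.diagonal (fun i => D i * E i) * star U := by
    intro D E
    simp only [mul_assoc]
    rw [← mul_assoc (star U) U, hUU, one_mul, ← mul_assoc (Matrix.diagonal D),
      Matrix.diagonal_mul_diagonal]
  have hspec : Y = U * Matrix.diagonal (fun i => (hY.eigenvalues i : ℂ)) * star U := by
    have := hY.spectral_theorem
    simp only [Unitary.conjStarAlgAut_apply, Unitary.coe_star, ← hUdef] at this
    exact this
  set B : Matrix n n ℂ := U * Matrix.diagonal (fun i => ((|hY.eigenvalues i| : ℝ) : ℂ)) * star U
    with hBdef
  have hBpsd : B.PosSemidef := by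
    apply Matrix.PosSemidef.mul_mul_conjTranspose_same
    refine Matrix.posSemidef_diagonal_iff.mpr fun i => ?_
    exact_mod_cast abs_nonneg _
  have hsq : B ^ 2 = Yᴴ * Y := by
    rw [hY.eq, pow_two, hBdef, key]
    conv_rhs => rw [hspec, key]
    have : (fun i => ((|hY.eigenvalues i| : ℝ) : ℂ) * ((|hY.eigenvalues i| : ℝ) : ℂ))
        = fun i => ((hY.eigenvalues i : ℝ) : ℂ) * ((hY.eigenvalues i : ℝ) : ℂ) := by
      funext i
      rw [← Complex.ofReal_mul, ← Complex.ofReal_mul, abs_mul_abs_self]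
    rw [this]
  have hYY := (Matrix.posSemidef_conjTranspose_mul_self Y).1
  have h1 : traceNorm Y = (cfc Real.sqrt (Yᴴ * Y)).trace.re := by
    rw [hYY.cfc_eq]; rfl
  have h2 : Yᴴ * Y = cfc (fun x : ℝ => x ^ 2) Y := by
    rw [hY.eq, ← pow_two, cfc_pow_id Y 2 hY.isSelfAdjoint]
  rw [h1, h2, ← cfc_comp Real.sqrt (fun x : ℝ => x ^ 2) Y]
  have h3 : cfc (Real.sqrt ∘ fun x : ℝ => x ^ 2) Y = cfc (fun x : ℝ => |x|) Y := by
    congr 1; funext x; simp [Real.sqrt_sq_eq_abs]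
  rw [h3, hY.cfc_eq, Matrix.IsHermitian.cfc]
  simp only [Unitary.conjStarAlgAut_apply, Unitary.coe_star, ← hUdef]
  rw [Matrix.trace_mul_cycle, hUU, one_mul, Matrix.trace_diagonal]
  simp

lemma re_trace_mul_le_traceNorm {n : Type*} [Fintype n] [DecidableEq n]
    {Y C : Matrix n n ℂ} (hY : Y.IsHermitian)
    (hC : ∀ u : n → ℂ, ‖star u ⬝ᵥ C *ᵥ u‖ ≤ ∑ a, Complex.normSq (u a)) :
    ((Y * C).trace).re ≤ traceNorm Y := by
  set U : Matrix n n ℂ := (hY.eigenvectorUnitary : Matrix n n ℂ) with hUdef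
  have hUU : star U * U = 1 := (Matrix.mem_unitaryGroup_iff').mp hY.eigenvectorUnitary.2
  have hspec : Y = U * Matrix.diagonal (fun i => (hY.eigenvalues i : ℂ)) * star U := by
    have := hY.spectral_theorem
    simp only [Unitary.conjStarAlgAut_apply, Unitary.coe_star, ← hUdef] at this
    exact this
  have hunit : ∀ i, ∑ a, Complex.normSq (U a i) = 1 := by
    intro i
    have h1 : (star U * U) i i = 1 := by rw [hUU]; simp
    have h2 : (star U * U) i i = ∑ a, ((Complex.normSq (U a i) : ℂ)) := by
      simp [Matrix.mul_apply, Matrix.star_apply, Complex.normSq_eq_conj_mul_self]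
    have := h1.symm.trans h2
    have := congrArg Complex.re this
    simpa using this.symm
  have htr : (Y * C).trace = ∑ i, (hY.eigenvalues i : ℂ) * (star U * (C * U)) i i := by
    conv_lhs => rw [hspec]
    rw [mul_assoc, mul_assoc, Matrix.trace_mul_comm]
    simp only [mul_assoc]
    simp [Matrix.trace, Matrix.diag, Matrix.diagonal_mul, mul_assoc]
  have hentry : ∀ i, (star U * (C * U)) i i = star (fun a => U a i) ⬝ᵥ C *ᵥ (fun a => U a i) := by
    intro i
    simp [Matrix.mul_apply, Matrix.mulVec, dotProduct, Matrix.star_apply,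
      Finset.mul_sum, mul_assoc]
  rw [htr, traceNorm_eq_sum_abs_eigenvalues hY, Complex.re_sum]
  apply Finset.sum_le_sum
  intro i _
  have hci : ‖(star U * (C * U)) i i‖ ≤ 1 := by
    rw [hentry i]
    calc ‖_‖ ≤ ∑ a, Complex.normSq (U a i) := hC _
    _ = 1 := hunit i
  calc ((hY.eigenvalues i : ℂ) * (star U * (C * U)) i i).re
      = hY.eigenvalues i * ((star U * (C * U)) i i).re := by
        simp [Complex.mul_re]
    _ ≤ |hY.eigenvalues i * ((star U * (C * U)) i i).re| := le_abs_self _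
    _ = |hY.eigenvalues i| * |((star U * (C * U)) i i).re| := abs_mul _ _
    _ ≤ |hY.eigenvalues i| * 1 := by
        apply mul_le_mul_of_nonneg_left _ (abs_nonneg _)
        exact (Complex.abs_re_le_norm _).trans hci
    _ = |hY.eigenvalues i| := mul_one _

lemma partialTranspose_isHermitian {k : ℕ} {d : Fin k → ℕ} (S : Finset (Fin k))
    {X : Matrix (PIdx k d) (PIdx k d) ℂ} (hX : X.IsHermitian) :
    (partialTranspose S X).IsHermitian := by
  ext a b
  simp only [Matrix.conjTranspose_apply, partialTranspose, Matrix.of_apply]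
  exact hX.apply _ _

lemma ghz_trace_eq {k dd : ℕ} (X : Matrix (PIdx k fun _ => dd) (PIdx k fun _ => dd) ℂ) :
    (GHZ k dd * X).trace
      = (dd : ℂ)⁻¹ * ∑ i : Fin dd, ∑ j : Fin dd,
          X (fun _ => j) (fun _ => i) := by
  classical
  have key : ∀ (i j : Fin dd),
      ((Matrix.of fun a b : PIdx k fun _ => dd =>
          if (∀ l, a l = i) ∧ (∀ l, b l = j) then (1:ℂ) else 0) * X).trace
        = X (fun _ => j) (fun _ => i) := by
    intro i j
    have hcond : ∀ a b : PIdx k fun _ => dd,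
        ((∀ l, a l = i) ∧ (∀ l, b l = j)) ↔ ((a = fun _ => i) ∧ (b = fun _ => j)) := by
      intro a b
      simp [funext_iff]
    simp only [Matrix.trace, Matrix.diag, Matrix.mul_apply, Matrix.of_apply, hcond,
      ite_and, ite_mul, one_mul, zero_mul]
    rw [Finset.sum_comm]
    simp [Finset.sum_ite_eq, Finset.sum_ite_eq']
  rw [GHZ]
  rw [Matrix.smul_mul, Matrix.trace_smul, smul_eq_mul]
  congr 1
  rw [Finset.sum_mul, Matrix.trace_sum]
  refine Finset.sum_congr rfl fun i _ => ?_
  rw [Finset.sum_mul, Matrix.trace_sum]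
  exact Finset.sum_congr rfl fun j _ => key i j

end Aux

/-- every element of the Rains set has GHZ overlap at most `1/d`. -/
theorem stmt6 {k : ℕ} (hk : 2 ≤ k) (dd : ℕ) (hdd : 2 ≤ dd)
    (τ : Matrix (PIdx k fun _ => dd) (PIdx k fun _ => dd) ℂ) (hτ : τ ∈ RainsSet k (fun _ => dd)) :
    ((GHZ k dd * τ).trace).re ≤ 1 / (dd : ℝ) := by
  classical
  obtain ⟨hpsd, f, hfpsd, hτeq, hsum⟩ := hτ
  have hdpos : (0:ℝ) < (dd:ℝ) := by exact_mod_cast Nat.lt_of_lt_of_le Nat.zero_lt_two hdd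
  have hS : ∀ S ∈ Bipartitions k, ((GHZ k dd * f S).trace).re
      ≤ (dd:ℝ)⁻¹ * traceNorm (partialTranspose S (f S)) := by
    intro S hSmem
    have hfSh : (f S).IsHermitian := (hfpsd S hSmem).1
    rw [Bipartitions, Finset.mem_filter] at hSmem
    obtain ⟨-, hSne, hS0⟩ := hSmem
    obtain ⟨ls, hls⟩ := hSne
    have hk0 : (0:ℕ) < k := by omega
    have hl0S : (⟨0, hk0⟩ : Fin k) ∉ S := fun h => hS0 _ h rfl
    set v : Fin dd → Fin dd → (PIdx k fun _ => dd) :=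
      fun i j l => if l ∈ S then j else i with hv
    have hvinj : ∀ i j i' j' : Fin dd, v i j = v i' j' → i = i' ∧ j = j' := by
      intro i j i' j' h
      constructor
      · have := congrFun h ⟨0, hk0⟩
        simpa [hv, hl0S] using this
      · have := congrFun h ls
        simpa [hv, hls] using this
    set Y := partialTranspose S (f S) with hYdef
    have hYh : Y.IsHermitian := partialTranspose_isHermitian S hfSh
    set C : Matrix (PIdx k fun _ => dd) (PIdx k fun _ => dd) ℂ :=
      ∑ p : Fin dd × Fin dd,
        Matrix.of (fun a b => if a = v p.1 p.2 ∧ b = v p.2 p.1 then (1:ℂ) else 0) with hCdef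
    have htrYC : (Y * C).trace = ∑ p : Fin dd × Fin dd, Y (v p.2 p.1) (v p.1 p.2) := by
      rw [hCdef, Finset.mul_sum, Matrix.trace_sum]
      refine Finset.sum_congr rfl fun p _ => ?_
      simp [Matrix.trace, Matrix.diag, Matrix.mul_apply, ite_and, Finset.sum_ite_eq,
        Finset.sum_ite_eq']
    have hCnum : ∀ u : PIdx k (fun _ => dd) → ℂ,
        ‖dotProduct (star u) (C.mulVec u)‖ ≤ ∑ a, Complex.normSq (u a) := by
      intro u
      have hval : dotProduct (star u) (C.mulVec u)
          = ∑ p : Fin dd × Fin dd, (starRingEnd ℂ) (u (v p.1 p.2)) * u (v p.2 p.1) := by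
        have hmv : C.mulVec u = fun a => ∑ p : Fin dd × Fin dd,
            if a = v p.1 p.2 then u (v p.2 p.1) else 0 := by
          funext a
          rw [hCdef]
          simp only [Matrix.mulVec, dotProduct, Matrix.sum_apply, Matrix.of_apply,
            Finset.sum_mul]
          rw [Finset.sum_comm]
          refine Finset.sum_congr rfl fun p _ => ?_
          simp [ite_and, ite_mul, Finset.sum_ite_eq']
        rw [hmv]
        simp only [dotProduct, Pi.star_apply, Finset.mul_sum]
        rw [Finset.sum_comm]
        refine Finset.sum_congr rfl fun p _ => ?_
        simp [Finset.sum_ite_eq', RingHom.comp_apply]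
      have himg : ∀ w : Fin dd × Fin dd → PIdx k (fun _ => dd), Function.Injective w →
          ∑ p : Fin dd × Fin dd, Complex.normSq (u (w p)) ≤ ∑ a, Complex.normSq (u a) := by
        intro w hw
        have heq : ∑ a ∈ Finset.univ.image w, Complex.normSq (u a)
            = ∑ p : Fin dd × Fin dd, Complex.normSq (u (w p)) :=
          Finset.sum_image (fun x _ y _ h => hw h)
        rw [← heq]
        exact Finset.sum_le_sum_of_subset_of_nonneg (Finset.subset_univ _)
          (fun _ _ _ => Complex.normSq_nonneg _)
      have hw1 : Function.Injective (fun p : Fin dd × Fin dd => v p.1 p.2) := by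
        intro p q h
        obtain ⟨h1, h2⟩ := hvinj _ _ _ _ h
        exact Prod.ext h1 h2
      have hw2 : Function.Injective (fun p : Fin dd × Fin dd => v p.2 p.1) := by
        intro p q h
        obtain ⟨h1, h2⟩ := hvinj _ _ _ _ h
        exact Prod.ext h2 h1
      calc ‖dotProduct (star u) (C.mulVec u)‖
          = ‖∑ p : Fin dd × Fin dd,
              (starRingEnd ℂ) (u (v p.1 p.2)) * u (v p.2 p.1)‖ := by rw [hval]
        _ ≤ ∑ p : Fin dd × Fin dd,
              ‖(starRingEnd ℂ) (u (v p.1 p.2)) * u (v p.2 p.1)‖ :=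
            norm_sum_le _ _
        _ ≤ ∑ p : Fin dd × Fin dd,
              (Complex.normSq (u (v p.1 p.2)) + Complex.normSq (u (v p.2 p.1))) / 2 := by
            refine Finset.sum_le_sum fun p _ => ?_
            rw [norm_mul, Complex.norm_conj]
            have h1 := Complex.sq_norm (u (v p.1 p.2))
            have h2 := Complex.sq_norm (u (v p.2 p.1))
            nlinarith [norm_nonneg (u (v p.1 p.2)), norm_nonneg (u (v p.2 p.1)),
              sq_nonneg (‖u (v p.1 p.2)‖ - ‖u (v p.2 p.1)‖)]
        _ = ((∑ p : Fin dd × Fin dd, Complex.normSq (u (v p.1 p.2)))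
              + ∑ p : Fin dd × Fin dd, Complex.normSq (u (v p.2 p.1))) / 2 := by
            rw [← Finset.sum_add_distrib, Finset.sum_div]
        _ ≤ ((∑ a, Complex.normSq (u a)) + ∑ a, Complex.normSq (u a)) / 2 := by
            have e1 := himg _ hw1
            have e2 := himg _ hw2
            have h2 : (0:ℝ) < 2 := by norm_num
            gcongr
        _ = ∑ a, Complex.normSq (u a) := by ring
    have hghz : (GHZ k dd * f S).trace = (dd:ℂ)⁻¹ * (Y * C).trace := by
      rw [ghz_trace_eq, htrYC]
      congr 1
      rw [Fintype.sum_prod_type]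
      refine Finset.sum_congr rfl fun i _ => Finset.sum_congr rfl fun j _ => ?_
      rw [hYdef]
      simp only [partialTranspose, Matrix.of_apply]
      congr 1 <;> funext l <;> by_cases h : l ∈ S <;> simp [hv, h]
    rw [hghz]
    have : ((dd:ℂ)⁻¹ * (Y * C).trace).re = (dd:ℝ)⁻¹ * ((Y * C).trace).re := by
      have : ((dd:ℂ))⁻¹ = (((dd:ℝ)⁻¹ : ℝ) : ℂ) := by push_cast; ring
      rw [this, Complex.re_ofReal_mul]
    rw [this]
    exact mul_le_mul_of_nonneg_left (re_trace_mul_le_traceNorm hYh hCnum)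
      (inv_nonneg.mpr hdpos.le)
  have hsplit : GHZ k dd * τ = ∑ S ∈ Bipartitions k, GHZ k dd * f S := by
    rw [hτeq, Finset.mul_sum]
  rw [hsplit, Matrix.trace_sum, Complex.re_sum]
  calc ∑ S ∈ Bipartitions k, ((GHZ k dd * f S).trace).re
      ≤ ∑ S ∈ Bipartitions k, (dd:ℝ)⁻¹ * traceNorm (partialTranspose S (f S)) :=
        Finset.sum_le_sum hS
    _ = (dd:ℝ)⁻¹ * ∑ S ∈ Bipartitions k, traceNorm (partialTranspose S (f S)) := by
        rw [Finset.mul_sum]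
    _ ≤ (dd:ℝ)⁻¹ * 1 := mul_le_mul_of_nonneg_left hsum (inv_nonneg.mpr hdpos.le)
    _ = 1 / (dd:ℝ) := by rw [mul_one, one_div]
end
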